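/- arXiv:1802.06052 — 7 statements merged into one kernel-verified Lean document; each statement's English description precedes it below -/
import Mathlib

section
/- Let f : X → ℝ be continuously differentiable on a box X = ∏ᵢ [0, bᵢ] ⊆ ℝⁿ, and suppose f is DR-submodular, i.e., x ≤ y componentwise implies ∇f(x) ≥ ∇f(y) componentwise. Then for any x ∈ X and any direction v ≥ 0 (componentwise), the function g(z) = f(x + z v) is concave on the interval where x + z v ∈ X. -/
/-!
Along the line `z ↦ x + z • v` the derivative of `g z = f (x + z • v)` is `⟪∇f (x + z • v), v⟫`.
For `v ≥ 0` the line is increasing in the componentwise order, so DR-submodularity makes this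
derivative antitone, and a differentiable function with antitone derivative is concave.
-/

theorem Convex.setOf_add_smul_mem {E : Type*} [AddCommGroup E] [Module ℝ E] {s : Set E}
    (hs : Convex ℝ s) (x v : E) : Convex ℝ {z : ℝ | x + z • v ∈ s} :=
  (hs.translate_preimage_right x).is_linear_preimage (IsLinearMap.isLinearMap_smul' v)

theorem EuclideanSpace.convex_setOf_forall_apply_mem {ι : Type*} {s : ι → Set ℝ}
    (hs : ∀ i, Convex ℝ (s i)) : Convex ℝ {y : EuclideanSpace ℝ ι | ∀ i, y i ∈ s i} := by
  simp only [Set.ofPred_forall]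
  exact convex_iInter fun i =>
    (hs i).is_linear_preimage (EuclideanSpace.proj i : EuclideanSpace ℝ ι →L[ℝ] ℝ).isLinear

theorem EuclideanSpace.inner_le_inner_of_le_of_nonneg {ι : Type*} [Fintype ι]
    {u w v : EuclideanSpace ℝ ι} (huw : ∀ i, u i ≤ w i) (hv : ∀ i, 0 ≤ v i) :
    inner ℝ u v ≤ inner ℝ w v := by
  simp only [PiLp.inner_apply, RCLike.inner_apply, conj_trivial]
  exact Finset.sum_le_sum fun i _ => mul_le_mul_of_nonneg_left (huw i) (hv i)

section LineRestriction

variable {E : Type*} [NormedAddCommGroup E] [NormedSpace ℝ E] {f : E → ℝ}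

theorem hasDerivAt_comp_add_smul {x v : E} {z : ℝ} (hf : DifferentiableAt ℝ f (x + z • v)) :
    HasDerivAt (fun t : ℝ => f (x + t • v)) (fderiv ℝ f (x + z • v) v) z := by
  have hline : HasDerivAt (fun t : ℝ => x + t • v) v z := by
    simpa using ((hasDerivAt_id z).smul_const v).const_add x
  exact hf.hasFDerivAt.comp_hasDerivAt z hline

theorem concaveOn_comp_add_smul_of_antitoneOn_fderiv {s : Set E} (hf : Differentiable ℝ f)
    (hs : Convex ℝ s) (x v : E)
    (h : AntitoneOn (fun z : ℝ => fderiv ℝ f (x + z • v) v) {z | x + z • v ∈ s}) :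
    ConcaveOn ℝ {z : ℝ | x + z • v ∈ s} (fun z => f (x + z • v)) := by
  have hderiv (z : ℝ) := hasDerivAt_comp_add_smul (x := x) (v := v) (hf (x + z • v))
  refine AntitoneOn.concaveOn_of_deriv (hs.setOf_add_smul_mem x v) ?_ ?_ ?_
  · exact HasDerivAt.continuousOn fun z _ => hderiv z
  · exact fun z _ => (hderiv z).differentiableAt.differentiableWithinAt
  · rw [funext fun z => (hderiv z).deriv]
    exact h.mono interior_subset

end LineRestriction

theorem drSubmodular_concave_along_nonneg_direction_general
    {n : ℕ} (b : EuclideanSpace ℝ (Fin n))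
    (X : Set (EuclideanSpace ℝ (Fin n)))
    (hX : X = {y : EuclideanSpace ℝ (Fin n) | ∀ i, y i ∈ Set.Icc 0 (b i)})
    (f : EuclideanSpace ℝ (Fin n) → ℝ)
    (hf : ContDiff ℝ 1 f)
    (hDR : ∀ x ∈ X, ∀ y ∈ X, (∀ i, x i ≤ y i) →
      ∀ i, gradient f y i ≤ gradient f x i)
    (x : EuclideanSpace ℝ (Fin n))
    (v : EuclideanSpace ℝ (Fin n)) (hv : ∀ i, 0 ≤ v i) :
    ConcaveOn ℝ {z : ℝ | x + z • v ∈ X} (fun z : ℝ => f (x + z • v)) := by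
  have hdiff : Differentiable ℝ f := hf.differentiable one_ne_zero
  have hXconv : Convex ℝ X :=
    hX ▸ EuclideanSpace.convex_setOf_forall_apply_mem fun i => convex_Icc 0 (b i)
  refine concaveOn_comp_add_smul_of_antitoneOn_fderiv hdiff hXconv x v
    fun z₁ hz₁ z₂ hz₂ hz => ?_
  have hle (i : Fin n) : (x + z₁ • v) i ≤ (x + z₂ • v) i := by
    simpa using mul_le_mul_of_nonneg_right hz (hv i)
  simp only [(hdiff _).hasGradientAt.fderiv_apply]
  exact EuclideanSpace.inner_le_inner_of_le_of_nonneg (hDR _ hz₁ _ hz₂ hle) hv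

/-- Concavity of a continuously differentiable DR-submodular function along
nonnegative directions, within the box `X = ∏ i, [0, b i]`. -/
theorem drSubmodular_concave_along_nonneg_direction
    {n : ℕ} (b : EuclideanSpace ℝ (Fin n)) (hb : ∀ i, 0 ≤ b i)
    (X : Set (EuclideanSpace ℝ (Fin n)))
    (hX : X = {y : EuclideanSpace ℝ (Fin n) | ∀ i, y i ∈ Set.Icc 0 (b i)})
    (f : EuclideanSpace ℝ (Fin n) → ℝ)
    (hf : ContDiff ℝ 1 f)
    (hDR : ∀ x ∈ X, ∀ y ∈ X, (∀ i, x i ≤ y i) →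
      ∀ i, gradient f y i ≤ gradient f x i)
    (x : EuclideanSpace ℝ (Fin n)) (hx : x ∈ X)
    (v : EuclideanSpace ℝ (Fin n)) (hv : ∀ i, 0 ≤ v i) :
    ConcaveOn ℝ {z : ℝ | x + z • v ∈ X} (fun z : ℝ => f (x + z • v)) :=
  drSubmodular_concave_along_nonneg_direction_general b X hX f hf hDR x v hv
end

section
/- Let F : X → ℝ₊ be a differentiable, monotone (x ≤ y implies F(x) ≤ F(y)), γ-weakly DR-submodular function on a box X ⊆ ℝ₊ⁿ. Then for any x, y ∈ X, F(y) - (1 + 1/γ²) F(x) ≤ (1/γ) ⟨∇F(x), y - x⟩. -/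
/-!
Put `z = x ⊔ y` and `w = x ⊓ y` (coordinatewise), so that `y - x = (z - x) - (x - w)` with both
differences nonnegative. By the mean value theorem on the segments `[x, z]` and `[w, x]`, weak
DR-submodularity compares the gradient along them with `∇F(x)`:
`γ (F z - F x) ≤ ⟪∇F x, z - x⟫` and `γ ⟪∇F x, x - w⟫ ≤ F x - F w ≤ F x`.
Monotonicity gives `F y ≤ F z`, and combining the two bounds yields the inequality.
-/

open RealInnerProductSpace

theorem exists_mem_segment_sub_eq_inner_gradient {E : Type*} [NormedAddCommGroup E]
    [InnerProductSpace ℝ E] [CompleteSpace E] {F : E → ℝ} (hF : Differentiable ℝ F) (x y : E) :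
    ∃ c ∈ segment ℝ x y, F y - F x = ⟪gradient F c, y - x⟫ := by
  obtain ⟨c, hc, h⟩ := domain_mvt (fun p _ => (hF p).hasFDerivAt.hasFDerivWithinAt)
    convex_univ (Set.mem_univ x) (Set.mem_univ y)
  exact ⟨c, hc, by rw [h, gradient, InnerProductSpace.toDual_symm_apply]⟩

namespace EuclideanSpace

variable {ι : Type*}

theorem apply_mem_Icc_of_mem_segment {x y c : EuclideanSpace ℝ ι} (hc : c ∈ segment ℝ x y)
    (hxy : ∀ i, x i ≤ y i) (i : ι) : c i ∈ Set.Icc (x i) (y i) := by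
  rw [← segment_eq_Icc (hxy i)]
  obtain ⟨a, b, ha, hb, hab, rfl⟩ := hc
  exact ⟨a, b, ha, hb, hab, by simp⟩

theorem convex_setOf_forall_apply_mem_s4 {s : ι → Set ℝ} (hs : ∀ i, Convex ℝ (s i)) :
    Convex ℝ {y : EuclideanSpace ℝ ι | ∀ i, y i ∈ s i} := by
  intro x hx y hy a b ha hb hab i
  simpa using hs i (hx i) (hy i) ha hb hab

theorem mul_inner_le_inner_of_forall [Fintype ι] {γ : ℝ} {g h v : EuclideanSpace ℝ ι}
    (hv : ∀ i, 0 ≤ v i) (hgh : ∀ i, γ * g i ≤ h i) : γ * ⟪g, v⟫ ≤ ⟪h, v⟫ := by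
  simp only [PiLp.inner_apply, RCLike.inner_apply, conj_trivial, Finset.mul_sum]
  refine Finset.sum_le_sum fun i _ => ?_
  rw [mul_comm (v i), mul_comm (v i), ← mul_assoc]
  exact mul_le_mul_of_nonneg_right (hgh i) (hv i)

theorem sub_eq_sup_sub_sub_sub_inf (x y : EuclideanSpace ℝ ι) :
    y - x = (WithLp.toLp 2 (x.ofLp ⊔ y.ofLp) - x) - (x - WithLp.toLp 2 (x.ofLp ⊓ y.ofLp)) := by
  ext i
  simp only [PiLp.sub_apply, Pi.sup_apply, Pi.inf_apply]
  linarith [max_add_min (x i) (y i)]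

end EuclideanSpace

section WeaklyDRSubmodular

variable {ι : Type*} [Fintype ι]

def WeaklyDRSubmodularOn (γ : ℝ) (S : Set (EuclideanSpace ℝ ι))
    (F : EuclideanSpace ℝ ι → ℝ) : Prop :=
  ∀ x ∈ S, ∀ y ∈ S, (∀ i, x i ≤ y i) → ∀ i, γ * gradient F y i ≤ gradient F x i

variable {γ : ℝ} {S : Set (EuclideanSpace ℝ ι)} {F : EuclideanSpace ℝ ι → ℝ}
  {x y : EuclideanSpace ℝ ι}

namespace WeaklyDRSubmodularOn

theorem mul_sub_le_inner_gradient (hDR : WeaklyDRSubmodularOn γ S F) (hS : Convex ℝ S)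
    (hF : Differentiable ℝ F) (hx : x ∈ S) (hy : y ∈ S) (hxy : ∀ i, x i ≤ y i) :
    γ * (F y - F x) ≤ ⟪gradient F x, y - x⟫ := by
  obtain ⟨c, hc, hFc⟩ := exists_mem_segment_sub_eq_inner_gradient hF x y
  rw [hFc]
  refine EuclideanSpace.mul_inner_le_inner_of_forall (fun i => ?_) ?_
  · simpa using hxy i
  · exact hDR x hx c (hS.segment_subset hx hy hc)
      fun i => (EuclideanSpace.apply_mem_Icc_of_mem_segment hc hxy i).1

theorem mul_inner_gradient_le_sub (hDR : WeaklyDRSubmodularOn γ S F) (hS : Convex ℝ S)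
    (hF : Differentiable ℝ F) (hx : x ∈ S) (hy : y ∈ S) (hxy : ∀ i, x i ≤ y i) :
    γ * ⟪gradient F y, y - x⟫ ≤ F y - F x := by
  obtain ⟨c, hc, hFc⟩ := exists_mem_segment_sub_eq_inner_gradient hF x y
  rw [hFc]
  refine EuclideanSpace.mul_inner_le_inner_of_forall (fun i => ?_) ?_
  · simpa using hxy i
  · exact hDR c (hS.segment_subset hx hy hc) y hy
      fun i => (EuclideanSpace.apply_mem_Icc_of_mem_segment hc hxy i).2

end WeaklyDRSubmodularOn

end WeaklyDRSubmodular

theorem weakly_drSubmodular_key_inequality_general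
    {n : ℕ} (b : EuclideanSpace ℝ (Fin n))
    (X : Set (EuclideanSpace ℝ (Fin n)))
    (hX : X = {y : EuclideanSpace ℝ (Fin n) | ∀ i, y i ∈ Set.Icc 0 (b i)})
    (F : EuclideanSpace ℝ (Fin n) → ℝ) (γ : ℝ) (hγ : γ ∈ Set.Ioc (0 : ℝ) 1)
    (hF : Differentiable ℝ F)
    (hnonneg : ∀ x ∈ X, 0 ≤ F x)
    (hmono : ∀ x ∈ X, ∀ y ∈ X, (∀ i, x i ≤ y i) → F x ≤ F y)
    (hweakDR : ∀ x ∈ X, ∀ y ∈ X, (∀ i, x i ≤ y i) →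
      ∀ i, γ * gradient F y i ≤ gradient F x i) :
    ∀ x ∈ X, ∀ y ∈ X,
      F y - (1 + 1 / γ ^ 2) * F x ≤ (1 / γ) * ⟪gradient F x, y - x⟫ := by
  subst hX
  intro x hx y hy
  have hDR : WeaklyDRSubmodularOn γ _ F := hweakDR
  have hconv := EuclideanSpace.convex_setOf_forall_apply_mem_s4 fun i => convex_Icc 0 (b i)
  set z := WithLp.toLp 2 (x.ofLp ⊔ y.ofLp)
  set w := WithLp.toLp 2 (x.ofLp ⊓ y.ofLp)
  have hz : ∀ i, z i ∈ Set.Icc 0 (b i) := fun i =>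
    ⟨le_max_of_le_left (hx i).1, max_le (hx i).2 (hy i).2⟩
  have hw : ∀ i, w i ∈ Set.Icc 0 (b i) := fun i =>
    ⟨le_min (hx i).1 (hy i).1, min_le_of_left_le (hx i).2⟩
  have hxz := hDR.mul_sub_le_inner_gradient hconv hF hx hz fun i => le_max_left (x i) (y i)
  have hwx := hDR.mul_inner_gradient_le_sub hconv hF hw hx fun i => min_le_left (x i) (y i)
  have hyz := hmono y hy z hz fun i => le_max_right (x i) (y i)
  have hw0 := hnonneg w hw
  rw [EuclideanSpace.sub_eq_sup_sub_sub_sub_inf x y, inner_sub_right]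
  obtain ⟨hγ0, -⟩ := hγ
  have hcombined : γ ^ 2 * (F y - F x) - F x ≤
      γ * (⟪gradient F x, z - x⟫ - ⟪gradient F x, x - w⟫) := by
    nlinarith [mul_le_mul_of_nonneg_left hxz hγ0.le, mul_le_mul_of_nonneg_left hyz (sq_nonneg γ)]
  calc F y - (1 + 1 / γ ^ 2) * F x = (γ ^ 2 * (F y - F x) - F x) / γ ^ 2 := by
        field_simp; ring
    _ ≤ γ * (⟪gradient F x, z - x⟫ - ⟪gradient F x, x - w⟫) / γ ^ 2 := by gcongr
    _ = 1 / γ * (⟪gradient F x, z - x⟫ - ⟪gradient F x, x - w⟫) := by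
        field_simp

/-- Key lemma for weakly DR-submodular functions:
`F(y) - (1 + 1/γ²) F(x) ≤ (1/γ) ⟨∇F(x), y - x⟩`. -/
theorem weakly_drSubmodular_key_inequality
    {n : ℕ} (b : EuclideanSpace ℝ (Fin n)) (hb : ∀ i, 0 ≤ b i)
    (X : Set (EuclideanSpace ℝ (Fin n)))
    (hX : X = {y : EuclideanSpace ℝ (Fin n) | ∀ i, y i ∈ Set.Icc 0 (b i)})
    (F : EuclideanSpace ℝ (Fin n) → ℝ) (γ : ℝ) (hγ : γ ∈ Set.Ioc (0 : ℝ) 1)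
    (hF : Differentiable ℝ F)
    (hnonneg : ∀ x ∈ X, 0 ≤ F x)
    (hmono : ∀ x ∈ X, ∀ y ∈ X, (∀ i, x i ≤ y i) → F x ≤ F y)
    (hweakDR : ∀ x ∈ X, ∀ y ∈ X, (∀ i, x i ≤ y i) →
      ∀ i, γ * gradient F y i ≤ gradient F x i) :
    ∀ x ∈ X, ∀ y ∈ X,
      F y - (1 + 1 / γ ^ 2) * F x ≤ (1 / γ) * ⟪gradient F x, y - x⟫ :=
  weakly_drSubmodular_key_inequality_general b X hX F γ hγ hF hnonneg hmono hweakDR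
end

section
/- Let f : X → ℝ be differentiable, monotone, and DR-submodular on a box X ⊆ ℝ₊ⁿ. Then for any x, x* ∈ X, f(x*) - f(x) ≤ ⟨∇f(x), x*⟩. (This uses nonnegativity of the gradient of a monotone function and concavity along nonnegative directions.) -/
/-!
With `z = x ⊔ x*`, monotonicity gives `f x* ≤ f z`. Along the segment from `x` to `z` the
direction `z - x` is nonnegative, so by the mean value theorem and the antitone gradient,
`f z - f x ≤ ⟪∇f x, z - x⟫`. Finally `z - x ≤ x*` in every coordinate where `x i > 0`, and
there `∇f x` is nonnegative because `f` is monotone along the segment `[x - x i • eᵢ, x]`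
inside the box; where `x i = 0` the two coordinates `(z - x) i` and `x* i` coincide.
-/

open RealInnerProductSpace Set

lemma nonneg_of_hasDerivAt_of_monotoneOn_Icc {g : ℝ → ℝ} {g' a t : ℝ} (hat : a < t)
    (hd : HasDerivAt g g' t) (hg : MonotoneOn g (Icc a t)) : 0 ≤ g' := by
  refine hd.hasDerivWithinAt.nonneg_of_monotoneOn ?_ hg
  rw [accPt_principal_iff_nhdsWithin, Icc_sdiff_right]
  exact right_nhdsWithin_Ico_neBot hat

lemma HasGradientAt.hasDerivAt_comp_add_smul {F : Type*} [NormedAddCommGroup F]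
    [InnerProductSpace ℝ F] [CompleteSpace F] {f : F → ℝ} {f' p v : F} {t : ℝ}
    (hf : HasGradientAt f f' (p + t • v)) :
    HasDerivAt (fun s => f (p + s • v)) ⟪f', v⟫ t := by
  have hline : HasDerivAt (fun s : ℝ => p + s • v) v t := by
    simpa using ((hasDerivAt_id t).smul_const v).const_add p
  have h : HasDerivAt (fun s => f (p + s • v)) _ t := hf.hasFDerivAt.comp_hasDerivAt t hline
  simpa using h

namespace EuclideanSpace

variable {ι : Type*}

lemma inner_le_inner_of_forall_mul_le [Fintype ι] {u v u' v' : EuclideanSpace ℝ ι}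
    (h : ∀ i, u i * v i ≤ u' i * v' i) : ⟪u, v⟫ ≤ ⟪u', v'⟫ := by
  simp only [PiLp.inner_apply, RCLike.inner_apply, conj_trivial]
  exact Finset.sum_le_sum fun i _ => by simpa only [mul_comm] using h i

def box (b : EuclideanSpace ℝ ι) : Set (EuclideanSpace ℝ ι) := {y | ∀ i, y i ∈ Icc 0 (b i)}

variable {b : EuclideanSpace ℝ ι}

lemma convex_box : Convex ℝ (box b) := fun x hx y hy s t hs ht hst i => by
  simpa using convex_Icc (0 : ℝ) (b i) (hx i) (hy i) hs ht hst

lemma sup_mem_box {x y : EuclideanSpace ℝ ι} (hx : x ∈ box b) (hy : y ∈ box b) :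
    WithLp.toLp 2 (fun i => max (x i) (y i)) ∈ box b := fun i =>
  ⟨le_max_of_le_left (hx i).1, max_le (hx i).2 (hy i).2⟩

lemma add_smul_single_mem_box [DecidableEq ι] {p : EuclideanSpace ℝ ι} (hp : p ∈ box b) {i : ι}
    {s : ℝ} (hs : s ∈ Icc (-p i) 0) : p + s • single i 1 ∈ box b := fun j => by
  by_cases hji : j = i
  · subst hji
    simp only [PiLp.add_apply, PiLp.smul_apply, PiLp.single_apply, if_pos, smul_eq_mul, mul_one]
    constructor <;> linarith [hs.1, hs.2, (hp j).2]
  · simpa [hji] using hp j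

variable [Fintype ι] {f : EuclideanSpace ℝ ι → ℝ}

lemma gradient_apply_nonneg_of_monotoneOn_box
    (hmono : ∀ x ∈ box b, ∀ y ∈ box b, (∀ i, x i ≤ y i) → f x ≤ f y)
    {p : EuclideanSpace ℝ ι} (hf : DifferentiableAt ℝ f p) (hp : p ∈ box b) {i : ι}
    (hpi : 0 < p i) : 0 ≤ gradient f p i := by
  classical
  have hd : HasDerivAt (fun s : ℝ => f (p + s • single i (1 : ℝ))) (gradient f p i) 0 := by
    have h : HasGradientAt f (gradient f p) (p + (0 : ℝ) • single i 1) := by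
      simpa using hf.hasGradientAt
    simpa only [inner_single_right, one_mul, conj_trivial] using h.hasDerivAt_comp_add_smul
  refine nonneg_of_hasDerivAt_of_monotoneOn_Icc (neg_lt_zero.2 hpi) hd ?_
  intro s hs s' hs' hss'
  refine hmono _ (add_smul_single_mem_box hp hs) _ (add_smul_single_mem_box hp hs') fun j => ?_
  by_cases hji : j = i
  · subst hji; simpa using hss'
  · simp [hji]

lemma sub_le_inner_gradient_of_antitoneOn {S : Set (EuclideanSpace ℝ ι)} (hS : Convex ℝ S)
    (hf : Differentiable ℝ f)
    (hDR : ∀ x ∈ S, ∀ y ∈ S, (∀ i, x i ≤ y i) → ∀ i, gradient f y i ≤ gradient f x i)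
    {x z : EuclideanSpace ℝ ι} (hx : x ∈ S) (hz : z ∈ S) (hxz : ∀ i, x i ≤ z i) :
    f z - f x ≤ ⟪gradient f x, z - x⟫ := by
  obtain ⟨c, hc, hslope⟩ := exists_hasDerivAt_eq_slope (fun s => f (x + s • (z - x)))
    (fun s => ⟪gradient f (x + s • (z - x)), z - x⟫) zero_lt_one
    (hf.continuous.comp (by fun_prop)).continuousOn
    fun s _ => (hf _).hasGradientAt.hasDerivAt_comp_add_smul
  have hxc : ∀ i, x i ≤ (x + c • (z - x)) i := fun i => by
    simp only [PiLp.add_apply, PiLp.smul_apply, PiLp.sub_apply, smul_eq_mul]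
    nlinarith [hxz i, hc.1]
  have hmem : x + c • (z - x) ∈ S := hS.add_smul_sub_mem hx hz ⟨hc.1.le, hc.2.le⟩
  calc f z - f x = ⟪gradient f (x + c • (z - x)), z - x⟫ := by simpa using hslope.symm
    _ ≤ ⟪gradient f x, z - x⟫ := inner_le_inner_of_forall_mul_le fun i =>
      mul_le_mul_of_nonneg_right (hDR x hx _ hmem hxc i) (sub_nonneg.2 (hxz i))

lemma inner_gradient_sup_sub_le
    (hmono : ∀ x ∈ box b, ∀ y ∈ box b, (∀ i, x i ≤ y i) → f x ≤ f y)
    {x y : EuclideanSpace ℝ ι} (hf : DifferentiableAt ℝ f x) (hx : x ∈ box b) (hy : y ∈ box b) :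
    ⟪gradient f x, WithLp.toLp 2 (fun i => max (x i) (y i)) - x⟫ ≤ ⟪gradient f x, y⟫ :=
  inner_le_inner_of_forall_mul_le fun i => by
    rcases (hx i).1.eq_or_lt with hxi | hxi
    · simp [← hxi, (hy i).1]
    · refine mul_le_mul_of_nonneg_left ?_
        (gradient_apply_nonneg_of_monotoneOn_box hmono hf hx hxi)
      simp only [PiLp.sub_apply, sub_le_iff_le_add]
      exact max_le (by linarith [(hy i).1]) (by linarith)

end EuclideanSpace

theorem drSubmodular_gap_bounded_by_inner_with_opt_general
    {n : ℕ} (b : EuclideanSpace ℝ (Fin n))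
    (X : Set (EuclideanSpace ℝ (Fin n)))
    (hX : X = {y : EuclideanSpace ℝ (Fin n) | ∀ i, y i ∈ Set.Icc 0 (b i)})
    (f : EuclideanSpace ℝ (Fin n) → ℝ)
    (hf : Differentiable ℝ f)
    (hmono : ∀ x ∈ X, ∀ y ∈ X, (∀ i, x i ≤ y i) → f x ≤ f y)
    (hDR : ∀ x ∈ X, ∀ y ∈ X, (∀ i, x i ≤ y i) →
      ∀ i, gradient f y i ≤ gradient f x i) :
    ∀ x ∈ X, ∀ xstar ∈ X, f xstar - f x ≤ ⟪gradient f x, xstar⟫ := by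
  subst hX
  intro x hx xstar hxs
  set z : EuclideanSpace ℝ (Fin n) := WithLp.toLp 2 fun i => max (x i) (xstar i)
  have hz : z ∈ EuclideanSpace.box b := EuclideanSpace.sup_mem_box hx hxs
  calc f xstar - f x ≤ f z - f x := by
        gcongr
        exact hmono xstar hxs z hz fun i => le_max_right _ _
    _ ≤ ⟪gradient f x, z - x⟫ :=
        EuclideanSpace.sub_le_inner_gradient_of_antitoneOn EuclideanSpace.convex_box hf hDR hx hz
          fun i => le_max_left _ _
    _ ≤ ⟪gradient f x, xstar⟫ := EuclideanSpace.inner_gradient_sup_sub_le hmono (hf x) hx hxs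

/-- For monotone DR-submodular `f` on a box in the positive orthant:
`f(x*) - f(x) ≤ ⟨∇f(x), x*⟩`. -/
theorem drSubmodular_gap_bounded_by_inner_with_opt
    {n : ℕ} (b : EuclideanSpace ℝ (Fin n)) (hb : ∀ i, 0 ≤ b i)
    (X : Set (EuclideanSpace ℝ (Fin n)))
    (hX : X = {y : EuclideanSpace ℝ (Fin n) | ∀ i, y i ∈ Set.Icc 0 (b i)})
    (f : EuclideanSpace ℝ (Fin n) → ℝ)
    (hf : Differentiable ℝ f)
    (hmono : ∀ x ∈ X, ∀ y ∈ X, (∀ i, x i ≤ y i) → f x ≤ f y)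
    (hDR : ∀ x ∈ X, ∀ y ∈ X, (∀ i, x i ≤ y i) →
      ∀ i, gradient f y i ≤ gradient f x i) :
    ∀ x ∈ X, ∀ xstar ∈ X, f xstar - f x ≤ ⟪gradient f x, xstar⟫ :=
  drSubmodular_gap_bounded_by_inner_with_opt_general b X hX f hf hmono hDR
end

section
/- Let f : [0,1]ⁿ → ℝ be twice continuously differentiable. Then f is continuous submodular (i.e., f(x) + f(y) ≥ f(x ∨ y) + f(x ∧ y) for all x, y, with componentwise max/min) if and only if all off-diagonal entries of its Hessian are nonpositive everywhere: ∂²f/∂xᵢ∂xⱼ ≤ 0 for all i ≠ j and all x. -/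
/-!
By the mean value theorem, applied once in each variable, the mixed second difference
`f (a + u + v) - f (a + u) - f (a + v) + f a` equals `D²f z u v` for some `z` in the
parallelogram spanned by `u` and `v` at `a`. For `x, y` in the cube take `a = x ⊓ y`,
`u = x - a`, `v = y - a`: then `a + u + v = x ⊔ y`, and `u, v ≥ 0` have disjoint supports, so
`D²f z u v` is a nonnegative combination of off-diagonal Hessian entries. Conversely,
submodularity on the corners of a small square spanned by `ε eᵢ` and `ε eⱼ` gives
`ε² ∂ᵢ∂ⱼ f z ≤ 0` at points `z` arbitrarily close to any point of the cube, and the Hessian is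
continuous.
-/

open Set

section MixedDifference

variable {E : Type*} [NormedAddCommGroup E] [NormedSpace ℝ E]

theorem hasDerivAt_comp_add_smul_s10 {F : Type*} [NormedAddCommGroup F] [NormedSpace ℝ F]
    {g : E → F} {c v : E} {t : ℝ} (hg : DifferentiableAt ℝ g (c + t • v)) :
    HasDerivAt (fun t : ℝ => g (c + t • v)) (fderiv ℝ g (c + t • v) v) t := by
  have hline : HasDerivAt (fun t : ℝ => c + t • v) v t := by
    simpa using ((hasDerivAt_id t).smul_const v).const_add c
  exact hg.hasFDerivAt.comp_hasDerivAt t hline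

theorem fderiv_fderiv_apply {f : E → ℝ} {x : E} (hf' : DifferentiableAt ℝ (fderiv ℝ f) x)
    (u v : E) : fderiv ℝ (fun y => fderiv ℝ f y v) x u = fderiv ℝ (fderiv ℝ f) x u v := by
  simp [fderiv_clm_apply hf' (differentiableAt_const v)]

theorem exists_mixed_difference_eq_fderiv_fderiv {f : E → ℝ} (hf : Differentiable ℝ f)
    (hf' : Differentiable ℝ (fderiv ℝ f)) (a u v : E) :
    ∃ s ∈ Ioo (0 : ℝ) 1, ∃ t ∈ Ioo (0 : ℝ) 1,
      f (a + u + v) - f (a + u) - f (a + v) + f a =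
        fderiv ℝ (fderiv ℝ f) (a + s • u + t • v) u v := by
  obtain ⟨t, ht, hφ⟩ := exists_hasDerivAt_eq_slope
    (fun t : ℝ => f (a + u + t • v) - f (a + t • v))
    (fun t => fderiv ℝ f (a + u + t • v) v - fderiv ℝ f (a + t • v) v) zero_lt_one
    (by have := hf.continuous; fun_prop)
    (fun t _ => (hasDerivAt_comp_add_smul_s10 (hf _)).sub (hasDerivAt_comp_add_smul_s10 (hf _)))
  obtain ⟨s, hs, hψ⟩ := exists_hasDerivAt_eq_slope
    (fun s : ℝ => fderiv ℝ f (a + t • v + s • u) v)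
    (fun s => fderiv ℝ (fderiv ℝ f) (a + t • v + s • u) u v) zero_lt_one
    (by have := hf'.continuous; fun_prop)
    (fun s _ => ((hasDerivAt_comp_add_smul_s10 (hf' _)).clm_apply (hasDerivAt_const s v)).congr_deriv
      (by simp))
  refine ⟨s, hs, t, ht, ?_⟩
  simp only [one_smul, zero_smul, add_zero, sub_zero, div_one] at hφ hψ
  rw [add_right_comm a (s • u), hψ, add_right_comm a (t • v), hφ]
  ring

end MixedDifference

def SubmodularOn {α : Type*} [Lattice α] (f : α → ℝ) (s : Set α) : Prop :=
  ∀ x ∈ s, ∀ y ∈ s, f (x ⊔ y) + f (x ⊓ y) ≤ f x + f y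

section Cube

variable {ι : Type*}

theorem ContinuousLinearMap.apply_apply_eq_sum [Fintype ι] [DecidableEq ι]
    (B : (ι → ℝ) →L[ℝ] (ι → ℝ) →L[ℝ] ℝ) (u v : ι → ℝ) :
    B u v = ∑ i, ∑ j, u i * v j * B (Pi.single i 1) (Pi.single j 1) := by
  conv_lhs => rw [pi_eq_sum_univ' u, pi_eq_sum_univ' v]
  simp only [map_sum, map_smul, FunLike.coe_sum, FunLike.coe_smul, Finset.sum_apply,
    Pi.smul_apply, smul_eq_mul, Finset.mul_sum]
  rw [Finset.sum_comm]
  simp only [mul_assoc, mul_left_comm]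

theorem ContinuousLinearMap.apply_apply_nonpos_of_offDiag_nonpos [Fintype ι] [DecidableEq ι]
    (B : (ι → ℝ) →L[ℝ] (ι → ℝ) →L[ℝ] ℝ)
    (hB : ∀ i j, i ≠ j → B (Pi.single i 1) (Pi.single j 1) ≤ 0) {u v : ι → ℝ}
    (hu : 0 ≤ u) (hv : 0 ≤ v) (huv : ∀ i, u i * v i = 0) : B u v ≤ 0 := by
  rw [B.apply_apply_eq_sum]
  refine Finset.sum_nonpos fun i _ => Finset.sum_nonpos fun j _ => ?_
  rcases eq_or_ne i j with rfl | hij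
  · simp [huv]
  · exact mul_nonpos_of_nonneg_of_nonpos (mul_nonneg (hu i) (hv j)) (hB i j hij)

theorem submodularOn_Icc_of_offDiag_nonpos [Fintype ι] [DecidableEq ι] {f : (ι → ℝ) → ℝ}
    {l h : ι → ℝ} (hf : Differentiable ℝ f) (hf' : Differentiable ℝ (fderiv ℝ f))
    (hH : ∀ i j, i ≠ j → ∀ z ∈ Icc l h,
      fderiv ℝ (fderiv ℝ f) z (Pi.single i 1) (Pi.single j 1) ≤ 0) :
    SubmodularOn f (Icc l h) := by
  intro x hx y hy
  set a := x ⊓ y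
  have hu : 0 ≤ x - a := sub_nonneg.2 inf_le_left
  have hv : 0 ≤ y - a := sub_nonneg.2 inf_le_right
  have huv : ∀ k, (x - a) k * (y - a) k = 0 := fun k => by
    rcases min_choice (x k) (y k) with hk | hk <;> simp [a, hk]
  have hsup : a + (x - a) + (y - a) = x ⊔ y := by
    rw [eq_sub_of_add_eq' (inf_add_sup x y)]; abel
  obtain ⟨s, hs, t, ht, hΔ⟩ :=
    exists_mixed_difference_eq_fderiv_fderiv hf hf' a (x - a) (y - a)
  have hz : a + s • (x - a) + t • (y - a) ∈ Icc l h := by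
    constructor
    · calc l ≤ a := le_inf hx.1 hy.1
        _ ≤ _ := le_add_of_le_of_nonneg (le_add_of_nonneg_right (smul_nonneg hs.1.le hu))
            (smul_nonneg ht.1.le hv)
    · calc _ ≤ a + (x - a) + (y - a) := add_le_add (add_le_add_right
            (smul_le_of_le_one_left hu hs.2.le) a) (smul_le_of_le_one_left hv ht.2.le)
        _ ≤ h := hsup ▸ sup_le hx.2 hy.2
  have hneg := ContinuousLinearMap.apply_apply_nonpos_of_offDiag_nonpos _
    (fun i j hij => hH i j hij _ hz) hu hv huv
  rw [hsup, add_sub_cancel, add_sub_cancel] at hΔ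
  linarith

theorem add_smul_single_sup_add_smul_single [DecidableEq ι] (a : ι → ℝ) {ε : ℝ} (hε : 0 ≤ ε)
    {i j : ι} (hij : i ≠ j) : (a + ε • Pi.single i 1) ⊔ (a + ε • Pi.single j 1) =
      a + ε • Pi.single i 1 + ε • Pi.single j 1 := by
  ext k; by_cases hi : k = i <;> by_cases hj : k = j <;> simp_all

theorem add_smul_single_inf_add_smul_single [DecidableEq ι] (a : ι → ℝ) {ε : ℝ} (hε : 0 ≤ ε)
    {i j : ι} (hij : i ≠ j) : (a + ε • Pi.single i 1) ⊓ (a + ε • Pi.single j 1) = a := by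
  ext k; by_cases hi : k = i <;> by_cases hj : k = j <;> simp_all

theorem single_one_mem_Icc [DecidableEq ι] (i : ι) : (Pi.single i 1 : ι → ℝ) ∈ Icc 0 1 :=
  ⟨Pi.single_nonneg.2 zero_le_one, fun k => by by_cases h : k = i <;> simp [h]⟩

theorem norm_le_one_of_mem_Icc [Fintype ι] {x : ι → ℝ} (hx : x ∈ Icc 0 1) : ‖x‖ ≤ 1 :=
  (pi_norm_le_iff_of_nonneg zero_le_one).2 fun k =>
    abs_le.2 ⟨(neg_nonpos.2 zero_le_one).trans (hx.1 k), hx.2 k⟩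

theorem exists_dist_le_offDiag_nonpos_of_submodularOn [Fintype ι] [DecidableEq ι]
    {f : (ι → ℝ) → ℝ} (hf : Differentiable ℝ f) (hf' : Differentiable ℝ (fderiv ℝ f))
    (hsub : SubmodularOn f (Icc 0 1)) {i j : ι} (hij : i ≠ j) {x : ι → ℝ} (hx : x ∈ Icc 0 1)
    {ε : ℝ} (hε : 0 < ε) (hε1 : ε ≤ 1) :
    ∃ z, dist z x ≤ 3 * ε ∧ fderiv ℝ (fderiv ℝ f) z (Pi.single i 1) (Pi.single j 1) ≤ 0 := by
  -- Basing the square at `(1 - ε) • x` keeps it inside the cube when `x` is on an upper face.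
  set a := (1 - ε) • x
  set ei : ι → ℝ := Pi.single i 1
  set ej : ι → ℝ := Pi.single j 1
  have hmem : ∀ k, a + ε • Pi.single k 1 ∈ Icc (0 : ι → ℝ) 1 := fun k =>
    convex_Icc 0 1 hx (single_one_mem_Icc k) (sub_nonneg.2 hε1) hε.le (sub_add_cancel 1 ε)
  have hΔ := hsub _ (hmem i) _ (hmem j)
  rw [add_smul_single_sup_add_smul_single a hε.le hij,
    add_smul_single_inf_add_smul_single a hε.le hij] at hΔ
  obtain ⟨s, hs, t, ht, hmvt⟩ :=
    exists_mixed_difference_eq_fderiv_fderiv hf hf' a (ε • ei) (ε • ej)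
  refine ⟨a + s • ε • ei + t • ε • ej, ?_, ?_⟩
  · have hdiff : a + s • ε • ei + t • ε • ej - x = ε • (s • ei + t • ej - x) := by
      simp only [a, smul_add, smul_sub, sub_smul, one_smul, smul_comm ε]; abel
    have hnorm : ‖s • ei + t • ej - x‖ ≤ 3 := calc
      _ ≤ ‖s • ei‖ + ‖t • ej‖ + ‖x‖ := norm_sub_le_of_le (norm_add_le _ _) le_rfl
      _ ≤ 1 + 1 + 1 := by
        gcongr
        · rw [norm_smul, Pi.norm_single, norm_one, mul_one, Real.norm_of_nonneg hs.1.le]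
          exact hs.2.le
        · rw [norm_smul, Pi.norm_single, norm_one, mul_one, Real.norm_of_nonneg ht.1.le]
          exact ht.2.le
        · exact norm_le_one_of_mem_Icc hx
      _ = 3 := by norm_num
    rw [dist_eq_norm, hdiff, norm_smul, Real.norm_of_nonneg hε.le]
    nlinarith
  · simp only [map_smul, smul_apply, smul_eq_mul] at hmvt
    nlinarith [mul_pos hε hε]

theorem offDiag_nonpos_of_submodularOn [Fintype ι] [DecidableEq ι] {f : (ι → ℝ) → ℝ}
    (hf : ContDiff ℝ 2 f) (hsub : SubmodularOn f (Icc 0 1)) {i j : ι} (hij : i ≠ j)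
    {x : ι → ℝ} (hx : x ∈ Icc 0 1) :
    fderiv ℝ (fderiv ℝ f) x (Pi.single i 1) (Pi.single j 1) ≤ 0 := by
  have hf' : ContDiff ℝ 1 (fderiv ℝ f) := hf.fderiv_right (by norm_num)
  have hclosed : IsClosed {z | fderiv ℝ (fderiv ℝ f) z (Pi.single i 1) (Pi.single j 1) ≤ 0} :=
    isClosed_le (by have := hf'.continuous_fderiv one_ne_zero; fun_prop) continuous_const
  refine hclosed.closure_subset (Metric.mem_closure_iff.2 fun δ hδ => ?_)
  obtain ⟨z, hz, hH⟩ := exists_dist_le_offDiag_nonpos_of_submodularOn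
    (hf.differentiable two_ne_zero) (hf'.differentiable one_ne_zero) hsub hij hx
    (ε := min 1 (δ / 4)) (by positivity) (min_le_left _ _)
  exact ⟨z, hH, by rw [dist_comm]; linarith [min_le_right 1 (δ / 4)]⟩

end Cube

/-- A twice continuously differentiable function on `[0,1]ⁿ` is continuous
submodular iff all off-diagonal entries of its Hessian are nonpositive there. -/
theorem continuous_submodular_iff_hessian_offdiag_nonpos
    {n : ℕ} (f : (Fin n → ℝ) → ℝ) (hf : ContDiff ℝ 2 f) :
    (∀ x ∈ Set.Icc (0 : Fin n → ℝ) 1, ∀ y ∈ Set.Icc (0 : Fin n → ℝ) 1,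
        f (x ⊔ y) + f (x ⊓ y) ≤ f x + f y) ↔
      (∀ i j : Fin n, i ≠ j → ∀ x ∈ Set.Icc (0 : Fin n → ℝ) 1,
        fderiv ℝ (fun y => fderiv ℝ f y (Pi.single j 1)) x (Pi.single i 1) ≤ 0) := by
  have hf' : Differentiable ℝ (fderiv ℝ f) :=
    (hf.fderiv_right (m := 1) (by norm_num)).differentiable one_ne_zero
  simp only [fderiv_fderiv_apply (hf' _)]
  exact ⟨fun hsub _ _ hij _ hx => offDiag_nonpos_of_submodularOn hf hsub hij hx,
    submodularOn_Icc_of_offDiag_nonpos (hf.differentiable two_ne_zero) hf'⟩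
end

section
/- Let W : 2^Ω → ℝ₊ be a weighted coverage function: W(S) = Σ_{u ∈ U, u covered by some Bᵢ ∈ S} w(u), with weights w(u) ≥ 0, where Ω = {B₁,…,Bₙ} is a collection of subsets of a finite set U. Its multilinear extension f̄(x) = Σ_{u ∈ U} w(u)(1 - ∏_{i : u ∈ Bᵢ} (1 - xᵢ)) and the concave function f̃(x) = Σ_{u ∈ U} w(u) · min{1, Σ_{i : u ∈ Bᵢ} xᵢ} satisfy (1 - 1/e) f̃(x) ≤ f̄(x) ≤ f̃(x) for all x ∈ [0,1]ⁿ. -/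
/-!
Everything happens element by element: for `u ∈ U` put `S = ∑_{i : u ∈ Bᵢ} xᵢ` and
`P = ∏_{i : u ∈ Bᵢ} (1 - xᵢ)`. The Weierstrass product inequality `1 - S ≤ P` and `P ≥ 0` give
`1 - P ≤ min 1 S`, while `1 - xᵢ ≤ e^{-xᵢ}` gives `1 - P ≥ 1 - e^{-S}`, and the concave function
`1 - e^{-t}` lies above its chord `(1 - e^{-1}) t` on `[0, 1]`. Summing against the nonnegative
weights `w u` gives both inequalities.
-/

open Finset Real

theorem one_sub_exp_neg_one_mul_min_le {t : ℝ} (ht : 0 ≤ t) :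
    (1 - exp (-1)) * min 1 t ≤ 1 - exp (-t) := by
  rcases le_total 1 t with h1t | ht1
  · rw [min_eq_left h1t, mul_one]
    linarith [exp_le_exp.2 (neg_le_neg h1t)]
  · rw [min_eq_right ht1]
    have hchord : exp (-t) ≤ (1 - t) * exp 0 + t * exp (-1) := by
      simpa [smul_eq_mul, mul_comm] using convexOn_exp.2 (Set.mem_univ 0) (Set.mem_univ (-1))
        (sub_nonneg.2 ht1) ht (sub_add_cancel 1 t)
    rw [exp_zero] at hchord
    linarith

namespace Finset

variable {ι : Type*} (s : Finset ι) {x : ι → ℝ}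

theorem one_sub_sum_le_prod_one_sub (hx0 : ∀ i ∈ s, 0 ≤ x i) (hx1 : ∀ i ∈ s, x i ≤ 1) :
    1 - ∑ i ∈ s, x i ≤ ∏ i ∈ s, (1 - x i) := by
  classical
  induction s using Finset.induction_on with
  | empty => simp
  | @insert a t ha ih =>
    simp only [mem_insert, forall_eq_or_imp] at hx0 hx1
    rw [sum_insert ha, prod_insert ha]
    have ht : 0 ≤ ∑ i ∈ t, x i := sum_nonneg hx0.2
    nlinarith [ih hx0.2 hx1.2, hx0.1, hx1.1]

theorem prod_one_sub_le_exp_neg_sum (hx1 : ∀ i ∈ s, x i ≤ 1) :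
    ∏ i ∈ s, (1 - x i) ≤ exp (-∑ i ∈ s, x i) := by
  rw [← sum_neg_distrib, exp_sum]
  exact prod_le_prod (fun i hi => sub_nonneg.2 (hx1 i hi)) fun i _ => one_sub_le_exp_neg (x i)

theorem one_sub_prod_one_sub_le_min_one_sum (hx0 : ∀ i ∈ s, 0 ≤ x i) (hx1 : ∀ i ∈ s, x i ≤ 1) :
    1 - ∏ i ∈ s, (1 - x i) ≤ min 1 (∑ i ∈ s, x i) := by
  have hP : 0 ≤ ∏ i ∈ s, (1 - x i) := prod_nonneg fun i hi => sub_nonneg.2 (hx1 i hi)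
  have := one_sub_sum_le_prod_one_sub s hx0 hx1
  exact le_min (by linarith) (by linarith)

theorem one_sub_exp_neg_one_mul_min_le_one_sub_prod (hx0 : ∀ i ∈ s, 0 ≤ x i)
    (hx1 : ∀ i ∈ s, x i ≤ 1) :
    (1 - exp (-1)) * min 1 (∑ i ∈ s, x i) ≤ 1 - ∏ i ∈ s, (1 - x i) :=
  (one_sub_exp_neg_one_mul_min_le (sum_nonneg hx0)).trans
    (sub_le_sub_left (s.prod_one_sub_le_exp_neg_sum hx1) 1)

end Finset

/-- The squeeze relation `(1 - 1/e) f̃(x) ≤ f̄(x) ≤ f̃(x)` between the multilinear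
extension of a weighted coverage function and its concave upper bound. -/
theorem coverage_multilinear_squeeze
    {U : Type*} [Fintype U] [DecidableEq U] {n : ℕ}
    (w : U → ℝ) (hw : ∀ u, 0 ≤ w u) (B : Fin n → Finset U)
    (fbar ftilde : (Fin n → ℝ) → ℝ)
    (hfbar : fbar = fun x => ∑ u : U, w u *
      (1 - ∏ i ∈ Finset.univ.filter (fun i => u ∈ B i), (1 - x i)))
    (hftilde : ftilde = fun x => ∑ u : U, w u *
      min 1 (∑ i ∈ Finset.univ.filter (fun i => u ∈ B i), x i)) :
    ∀ x ∈ Set.Icc (0 : Fin n → ℝ) 1,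
      (1 - Real.exp (-1)) * ftilde x ≤ fbar x ∧ fbar x ≤ ftilde x := by
  rintro x ⟨hx0, hx1⟩
  subst hfbar hftilde
  constructor
  · rw [mul_sum]
    refine sum_le_sum fun u _ => ?_
    rw [mul_left_comm]
    exact mul_le_mul_of_nonneg_left
      (one_sub_exp_neg_one_mul_min_le_one_sub_prod _ (fun i _ => hx0 i) fun i _ => hx1 i) (hw u)
  · exact sum_le_sum fun u _ => mul_le_mul_of_nonneg_left
      (one_sub_prod_one_sub_le_min_one_sum _ (fun i _ => hx0 i) fun i _ => hx1 i) (hw u)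
end

section
/- If W : 2^[n] → ℝ is monotone and submodular, then its multilinear extension f̄(x) = Σ_{S ⊆ [n]} W(S) ∏_{i ∈ S} xᵢ ∏_{j ∉ S} (1 - xⱼ) is monotone and DR-submodular on [0,1]ⁿ: for all i, j and all x ∈ (0,1)ⁿ, ∂²f̄/∂xᵢ∂xⱼ(x) ≤ 0, and ∂f̄/∂xᵢ(x) ≥ 0. -/
/-!
Differentiating the multilinear extension of `W` in the direction `e_j` gives the multilinear
extension of the marginal gain `S ↦ W (S ∪ {j}) - W (S \ {j})`, so the second partials are
multilinear extensions of second differences of `W`. Monotonicity makes the marginal gains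
nonnegative and submodularity makes the second differences nonpositive; a multilinear extension
is an average of the values of its set function on `[0,1]ⁿ`, so these signs carry over.
-/

open Finset

variable {ι : Type*} [DecidableEq ι]

lemma Finset.sum_univ_eq_sum_powerset_erase [Fintype ι] {M : Type*} [AddCommMonoid M] (j : ι)
    (f : Finset ι → M) : ∑ S, f S = ∑ T ∈ (univ.erase j).powerset, (f T + f (insert j T)) := by
  rw [sum_add_distrib, ← sum_powerset_insert (notMem_erase j univ), insert_erase (mem_univ j),
    powerset_univ]

def marginalGain (W : Finset ι → ℝ) (j : ι) (S : Finset ι) : ℝ :=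
  W (insert j S) - W (S.erase j)

lemma marginalGain_nonneg {W : Finset ι → ℝ} (hW : Monotone W) (j : ι) (S : Finset ι) :
    0 ≤ marginalGain W j S :=
  sub_nonneg.mpr (hW ((erase_subset j S).trans (subset_insert j S)))

lemma marginalGain_marginalGain_nonpos {W : Finset ι → ℝ}
    (hW : ∀ A B, W (A ∪ B) + W (A ∩ B) ≤ W A + W B) (i j : ι) (S : Finset ι) :
    marginalGain (marginalGain W j) i S ≤ 0 := by
  by_cases hij : i = j
  · subst hij
    have h : insert i (S.erase i) = insert i S := by
      ext k; by_cases k = i <;> simp_all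
    simp [marginalGain, h]
  · have h := hW ((insert i S).erase j) (insert j (S.erase i))
    have hunion : (insert i S).erase j ∪ insert j (S.erase i) = insert j (insert i S) := by
      ext k; by_cases k = i <;> by_cases k = j <;> simp_all
    have hinter : (insert i S).erase j ∩ insert j (S.erase i) = (S.erase i).erase j := by
      ext k; by_cases k = i <;> by_cases k = j <;> simp_all
    rw [hunion, hinter] at h
    simp only [marginalGain]
    linarith

/-- `∏ k, bernoulliWeight S x k` is the probability that the random set containing each `k`
independently with probability `x k` equals `S`. -/
def bernoulliWeight (S : Finset ι) (x : ι → ℝ) (k : ι) : ℝ :=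
  if k ∈ S then x k else 1 - x k

lemma bernoulliWeight_nonneg {x : ι → ℝ} (hx : ∀ k, x k ∈ Set.Icc 0 1) (S : Finset ι) (k : ι) :
    0 ≤ bernoulliWeight S x k := by
  have := hx k
  unfold bernoulliWeight
  split_ifs <;> simp_all

lemma bernoulliWeight_insert_of_ne {j k : ι} (hk : k ≠ j) (S : Finset ι) (x : ι → ℝ) :
    bernoulliWeight (insert j S) x k = bernoulliWeight S x k := by
  simp [bernoulliWeight, hk]

section

variable [Fintype ι]

lemma hasFDerivAt_bernoulliWeight (S : Finset ι) (k : ι) (x : ι → ℝ) :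
    HasFDerivAt (bernoulliWeight S · k)
      (if k ∈ S then ContinuousLinearMap.proj (R := ℝ) k else -ContinuousLinearMap.proj k) x := by
  by_cases hk : k ∈ S
  · simpa [bernoulliWeight, hk] using hasFDerivAt_apply k x
  · simpa [bernoulliWeight, hk] using (hasFDerivAt_apply (𝕜 := ℝ) k x).const_sub 1

lemma differentiable_prod_bernoulliWeight (S : Finset ι) :
    Differentiable ℝ (fun y => ∏ k, bernoulliWeight S y k) := fun x =>
  (HasFDerivAt.finsetProd fun k _ => hasFDerivAt_bernoulliWeight S k x).differentiableAt

lemma fderiv_prod_bernoulliWeight_apply_single (S : Finset ι) (x : ι → ℝ) (j : ι) :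
    fderiv ℝ (fun y => ∏ k, bernoulliWeight S y k) x (Pi.single j 1) =
      (if j ∈ S then 1 else -1) * ∏ k ∈ univ.erase j, bernoulliWeight S x k := by
  rw [(HasFDerivAt.finsetProd fun k _ => hasFDerivAt_bernoulliWeight S k x).fderiv,
    _root_.sum_apply, sum_eq_single j (fun k _ hk => by split_ifs <;> simp [hk]) (by simp)]
  split_ifs <;> simp

def multilinearExtension (W : Finset ι → ℝ) (x : ι → ℝ) : ℝ :=
  ∑ S, W S * ∏ k, bernoulliWeight S x k

lemma multilinearExtension_eq_sum_powerset (W : Finset ι → ℝ) (x : ι → ℝ) :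
    multilinearExtension W x =
      ∑ S ∈ univ.powerset, W S * (∏ i ∈ S, x i) * ∏ j ∈ Sᶜ, (1 - x j) := by
  rw [powerset_univ]
  refine sum_congr rfl fun S _ => ?_
  rw [mul_assoc, ← prod_mul_prod_compl S]
  congr 2 <;> refine prod_congr rfl fun k hk => ?_ <;> simp_all [bernoulliWeight]

/-- Pairing `T` with `insert j T` for `j ∉ T`, both sides equal
`∑ T, (W (insert j T) - W T) * ∏ k ≠ j, bernoulliWeight T x k`. -/
theorem fderiv_multilinearExtension_apply_single (W : Finset ι → ℝ) (x : ι → ℝ) (j : ι) :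
    fderiv ℝ (multilinearExtension W) x (Pi.single j 1) =
      multilinearExtension (marginalGain W j) x := by
  unfold multilinearExtension
  rw [fderiv_fun_sum fun S _ => ((differentiable_prod_bernoulliWeight S x).const_mul (W S)),
    _root_.sum_apply, sum_univ_eq_sum_powerset_erase j, sum_univ_eq_sum_powerset_erase j]
  refine sum_congr rfl fun T hT => ?_
  have hjT : j ∉ T := fun h => notMem_erase j univ (mem_powerset.mp hT h)
  have hprod : ∏ k ∈ univ.erase j, bernoulliWeight (insert j T) x k =
      ∏ k ∈ univ.erase j, bernoulliWeight T x k :=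
    prod_congr rfl fun k hk => bernoulliWeight_insert_of_ne (ne_of_mem_erase hk) T x
  simp only [fderiv_const_mul (differentiable_prod_bernoulliWeight _ x),
    _root_.smul_apply, fderiv_prod_bernoulliWeight_apply_single, smul_eq_mul,
    ← mul_prod_erase univ (bernoulliWeight _ x) (mem_univ j), hprod, marginalGain,
    insert_idem, erase_insert hjT, erase_eq_of_notMem hjT]
  simp only [bernoulliWeight, hjT, mem_insert_self, if_true, if_false]
  ring

variable {W : Finset ι → ℝ} {x : ι → ℝ}

lemma multilinearExtension_nonneg (hW : ∀ S, 0 ≤ W S) (hx : ∀ k, x k ∈ Set.Icc 0 1) :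
    0 ≤ multilinearExtension W x :=
  sum_nonneg fun S _ => mul_nonneg (hW S) (prod_nonneg fun k _ => bernoulliWeight_nonneg hx S k)

lemma multilinearExtension_nonpos (hW : ∀ S, W S ≤ 0) (hx : ∀ k, x k ∈ Set.Icc 0 1) :
    multilinearExtension W x ≤ 0 :=
  sum_nonpos fun S _ =>
    mul_nonpos_of_nonpos_of_nonneg (hW S) (prod_nonneg fun k _ => bernoulliWeight_nonneg hx S k)

end

/-- The multilinear extension of a monotone submodular set function is monotone
and DR-submodular: on `(0,1)ⁿ` all second partials are nonpositive and all first
partials are nonnegative. -/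
theorem multilinear_extension_monotone_drSubmodular
    {n : ℕ} (W : Finset (Fin n) → ℝ)
    (hmono : ∀ A B : Finset (Fin n), A ⊆ B → W A ≤ W B)
    (hsub : ∀ A B : Finset (Fin n), W (A ∪ B) + W (A ∩ B) ≤ W A + W B)
    (fbar : (Fin n → ℝ) → ℝ)
    (hfbar : fbar = fun x => ∑ S ∈ (Finset.univ : Finset (Fin n)).powerset,
      W S * (∏ i ∈ S, x i) * ∏ j ∈ Sᶜ, (1 - x j)) :
    ∀ x : Fin n → ℝ, (∀ i, x i ∈ Set.Ioo (0:ℝ) 1) → ∀ i j : Fin n,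
      fderiv ℝ (fun y => fderiv ℝ fbar y (Pi.single j 1)) x (Pi.single i 1) ≤ 0 ∧
      0 ≤ fderiv ℝ fbar x (Pi.single i 1) := by
  intro x hx i j
  have hx' : ∀ k, x k ∈ Set.Icc 0 1 := fun k => Set.Ioo_subset_Icc_self (hx k)
  obtain rfl : fbar = multilinearExtension W :=
    hfbar.trans (funext fun y => (multilinearExtension_eq_sum_powerset W y).symm)
  have hpartial : (fun y => fderiv ℝ (multilinearExtension W) y (Pi.single j 1)) =
      multilinearExtension (marginalGain W j) :=
    funext fun y => fderiv_multilinearExtension_apply_single W y j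
  rw [hpartial, fderiv_multilinearExtension_apply_single, fderiv_multilinearExtension_apply_single]
  exact ⟨multilinearExtension_nonpos (marginalGain_marginalGain_nonpos hsub i j) hx',
    multilinearExtension_nonneg (marginalGain_nonneg (fun A B => hmono A B) i) hx'⟩
end

section
/- Online gradient ascent 1/2-regret bound: Let f₁,…,f_T : X → ℝ₊ be differentiable, monotone, DR-submodular on a box X ⊇ P, with P closed convex, diam(P) = D, and ‖∇f_t(x)‖ ≤ G on P. With updates x_{t+1} = Π_P(x_t + η_t ∇f_t(x_t)), η_t = D/(G√t), we have (1/2) Σ_{t=1}^T f_t(x*) - Σ_{t=1}^T f_t(x_t) ≤ (3/4) DG√T, where x* maximizes Σ_t f_t over P. -/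
/-!
Along the coordinatewise join `x ⊔ y` and meet `x ⊓ y`, DR-submodularity bounds each increment
by the gradient at the lower or upper endpoint; with monotonicity and `f ≥ 0` this gives
`f y - 2 f x ≤ ⟪∇f x, y - x⟫`, so the `1/2`-regret is at most half the linear regret
`∑ ⟪∇f_t(x_t), x* - x_t⟫`. That is Zinkevich's bound for projected gradient steps: projection onto
a convex set moves no point of the set farther away, the resulting one-step inequality telescopes
against the increasing weights `1 / (2 η_t)` to `D² / (2 η_T) = DG√T / 2`, and
`∑ η_t G² / 2 ≤ DG√T` because `∑ 1/√t ≤ 2√T`.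
-/

open Finset RealInnerProductSpace

section Coordinatewise

variable {n : ℕ}

lemma inner_le_inner_of_le_of_nonneg {a a' d : EuclideanSpace ℝ (Fin n)}
    (h : ∀ i, a i ≤ a' i) (hd : ∀ i, 0 ≤ d i) : ⟪a, d⟫ ≤ ⟪a', d⟫ := by
  simp only [PiLp.inner_apply, RCLike.inner_apply, conj_trivial]
  exact sum_le_sum fun i _ => mul_le_mul_of_nonneg_left (h i) (hd i)

lemma apply_mem_Icc_of_mem_segment {p q z : EuclideanSpace ℝ (Fin n)} (hz : z ∈ segment ℝ p q)
    (hpq : ∀ i, p i ≤ q i) (i : Fin n) : z i ∈ Set.Icc (p i) (q i) := by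
  have hzi : z i ∈ segment ℝ (p i) (q i) := by
    have := image_segment ℝ (EuclideanSpace.proj i : _ →L[ℝ] ℝ).toLinearMap.toAffineMap p q
    exact this ▸ Set.mem_image_of_mem _ hz
  exact segment_subset_Icc (hpq i) hzi

lemma exists_mem_segment_sub_eq_inner_gradient_s17 {f : EuclideanSpace ℝ (Fin n) → ℝ}
    (hf : Differentiable ℝ f) (p q : EuclideanSpace ℝ (Fin n)) :
    ∃ z ∈ segment ℝ p q, f q - f p = ⟪gradient f z, q - p⟫ := by
  obtain ⟨z, hz, h⟩ := domain_mvt (fun z _ => (hf z).hasFDerivAt.hasFDerivWithinAt)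
    convex_univ (Set.mem_univ p) (Set.mem_univ q)
  exact ⟨z, hz, by rw [h, gradient, InnerProductSpace.toDual_symm_apply]⟩

variable {f : EuclideanSpace ℝ (Fin n) → ℝ} {X : Set (EuclideanSpace ℝ (Fin n))}
  {p q : EuclideanSpace ℝ (Fin n)}

lemma sub_le_inner_gradient_of_le (hX : Convex ℝ X) (hf : Differentiable ℝ f)
    (hDR : ∀ x ∈ X, ∀ y ∈ X, (∀ i, x i ≤ y i) → ∀ i, gradient f y i ≤ gradient f x i)
    (hp : p ∈ X) (hq : q ∈ X) (hpq : ∀ i, p i ≤ q i) :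
    f q - f p ≤ ⟪gradient f p, q - p⟫ := by
  obtain ⟨z, hz, h⟩ := exists_mem_segment_sub_eq_inner_gradient_s17 hf p q
  rw [h]
  refine inner_le_inner_of_le_of_nonneg (hDR p hp z (hX.segment_subset hp hq hz) fun i => ?_)
    fun i => sub_nonneg.2 (hpq i)
  exact (apply_mem_Icc_of_mem_segment hz hpq i).1

lemma inner_gradient_le_sub_of_le (hX : Convex ℝ X) (hf : Differentiable ℝ f)
    (hDR : ∀ x ∈ X, ∀ y ∈ X, (∀ i, x i ≤ y i) → ∀ i, gradient f y i ≤ gradient f x i)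
    (hp : p ∈ X) (hq : q ∈ X) (hpq : ∀ i, p i ≤ q i) :
    ⟪gradient f q, q - p⟫ ≤ f q - f p := by
  obtain ⟨z, hz, h⟩ := exists_mem_segment_sub_eq_inner_gradient_s17 hf p q
  rw [h]
  refine inner_le_inner_of_le_of_nonneg (hDR z (hX.segment_subset hp hq hz) q hq fun i => ?_)
    fun i => sub_nonneg.2 (hpq i)
  exact (apply_mem_Icc_of_mem_segment hz hpq i).2

def nonnegBox (b : EuclideanSpace ℝ (Fin n)) : Set (EuclideanSpace ℝ (Fin n)) :=
  {y | ∀ i, y i ∈ Set.Icc 0 (b i)}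

lemma convex_nonnegBox (b : EuclideanSpace ℝ (Fin n)) : Convex ℝ (nonnegBox b) := by
  intro x hx y hy s t hs ht hst i
  simp only [PiLp.add_apply, PiLp.smul_apply, smul_eq_mul]
  have hxi := hx i
  have hyi := hy i
  constructor <;> nlinarith [hxi.1, hxi.2, hyi.1, hyi.2]

lemma isBounded_nonnegBox (b : EuclideanSpace ℝ (Fin n)) :
    Bornology.IsBounded (nonnegBox b) := by
  refine (Metric.isBounded_closedBall (x := 0) (r := ‖b‖)).subset fun y hy => ?_
  rw [mem_closedBall_zero_iff, EuclideanSpace.norm_eq, EuclideanSpace.norm_eq]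
  gcongr with i
  obtain ⟨hy0, hyb⟩ := hy i
  rw [Real.norm_of_nonneg hy0, Real.norm_of_nonneg (hy0.trans hyb)]
  exact hyb

lemma sub_two_mul_le_inner_gradient {b x y : EuclideanSpace ℝ (Fin n)} (hf : Differentiable ℝ f)
    (hnonneg : ∀ x ∈ nonnegBox b, 0 ≤ f x)
    (hmono : ∀ x ∈ nonnegBox b, ∀ y ∈ nonnegBox b, (∀ i, x i ≤ y i) → f x ≤ f y)
    (hDR : ∀ x ∈ nonnegBox b, ∀ y ∈ nonnegBox b, (∀ i, x i ≤ y i) →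
      ∀ i, gradient f y i ≤ gradient f x i)
    (hx : x ∈ nonnegBox b) (hy : y ∈ nonnegBox b) :
    f y - 2 * f x ≤ ⟪gradient f x, y - x⟫ := by
  set u : EuclideanSpace ℝ (Fin n) := WithLp.toLp 2 fun i => max (x i) (y i)
  set v : EuclideanSpace ℝ (Fin n) := WithLp.toLp 2 fun i => min (x i) (y i)
  have hu : u ∈ nonnegBox b := fun i =>
    ⟨le_max_of_le_left (hx i).1, max_le (hx i).2 (hy i).2⟩
  have hv : v ∈ nonnegBox b := fun i =>
    ⟨le_min (hx i).1 (hy i).1, min_le_of_left_le (hx i).2⟩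
  have hsplit : y - x = (u - x) - (x - v) := by
    ext i
    simp only [PiLp.sub_apply, u, v]
    linarith [max_add_min (x i) (y i)]
  have hup := sub_le_inner_gradient_of_le (convex_nonnegBox b) hf hDR hx hu
    fun i => le_max_left (x i) (y i)
  have hdown := inner_gradient_le_sub_of_le (convex_nonnegBox b) hf hDR hv hx
    fun i => min_le_left (x i) (y i)
  have hyu : f y ≤ f u := hmono y hy u hu fun i => le_max_right (x i) (y i)
  rw [hsplit, inner_sub_right]
  linarith [hnonneg v hv]

end Coordinatewise

section ProjectedGradient

variable {E : Type*} [NormedAddCommGroup E] [InnerProductSpace ℝ E] {P : Set E}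

lemma Convex.norm_sub_le_of_forall_norm_sub_le (hP : Convex ℝ P) {z p v : E} (hp : p ∈ P)
    (hmin : ∀ w ∈ P, ‖z - p‖ ≤ ‖z - w‖) (hv : v ∈ P) : ‖p - v‖ ≤ ‖z - v‖ := by
  have : Nonempty P := ⟨⟨p, hp⟩⟩
  have hinf : ‖z - p‖ = ⨅ w : P, ‖z - w‖ :=
    le_antisymm (le_ciInf fun w => hmin w w.2)
      (ciInf_le ⟨0, Set.forall_mem_range.2 fun _ => norm_nonneg _⟩ (⟨p, hp⟩ : P))
  have hangle : ⟪z - p, v - p⟫ ≤ 0 := (norm_eq_iInf_iff_real_inner_le_zero hP hp).1 hinf v hv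
  have hexpand : ‖z - v‖ ^ 2 = ‖z - p‖ ^ 2 - 2 * ⟪z - p, v - p⟫ + ‖v - p‖ ^ 2 := by
    rw [← norm_sub_sq_real, sub_sub_sub_cancel_right]
  rw [norm_sub_rev p v]
  exact (sq_le_sq₀ (norm_nonneg _) (norm_nonneg _)).1 (by nlinarith [sq_nonneg ‖z - p‖])

lemma two_mul_inner_le_of_norm_sub_le {x x' g v : E} {η : ℝ}
    (h : ‖x' - v‖ ≤ ‖x + η • g - v‖) :
    2 * η * ⟪g, v - x⟫ ≤ ‖x - v‖ ^ 2 - ‖x' - v‖ ^ 2 + η ^ 2 * ‖g‖ ^ 2 := by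
  have hexpand : ‖x + η • g - v‖ ^ 2 = ‖x - v‖ ^ 2 - 2 * η * ⟪g, v - x⟫ + η ^ 2 * ‖g‖ ^ 2 := by
    rw [show x + η • g - v = (x - v) + η • g by abel, norm_add_sq_real, real_inner_smul_right,
      norm_smul, mul_pow, Real.norm_eq_abs, sq_abs, ← neg_sub x v, inner_neg_right, real_inner_comm]
    ring
  nlinarith [pow_le_pow_left₀ (norm_nonneg _) h 2]

end ProjectedGradient

lemma sum_Icc_mul_sub_le (w a : ℕ → ℝ) (C : ℝ) (hw : Monotone w) (hw0 : 0 ≤ w 0) :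
    ∀ T : ℕ, (∀ t ∈ Icc 1 (T + 1), a t ≤ C) →
      ∑ t ∈ Icc 1 T, w t * (a t - a (t + 1)) ≤ w T * (C - a (T + 1)) := by
  intro T
  induction T with
  | zero =>
    intro ha
    simpa using mul_nonneg hw0 (sub_nonneg.2 (ha 1 (by simp)))
  | succ T ih =>
    intro ha
    have hle : a (T + 1) ≤ C := ha (T + 1) (by simp)
    have ih' := ih fun t ht => ha t (Icc_subset_Icc_right (by omega) ht)
    rw [sum_Icc_succ_top (by omega)]
    nlinarith [hw (Nat.le_succ T)]

lemma sum_Icc_inv_sqrt_le (T : ℕ) : ∑ t ∈ Icc 1 T, 1 / √(t : ℝ) ≤ 2 * √(T : ℝ) := by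
  induction T with
  | zero => simp
  | succ T ih =>
    rw [sum_Icc_succ_top (by omega)]
    have hs : √(T : ℝ) ^ 2 = T := Real.sq_sqrt (by positivity)
    have hu : √((T : ℝ) + 1) ^ 2 = T + 1 := Real.sq_sqrt (by positivity)
    have hu0 : 0 < √((T : ℝ) + 1) := Real.sqrt_pos.2 (by positivity)
    have key : 1 / √((T : ℝ) + 1) ≤ 2 * √((T : ℝ) + 1) - 2 * √(T : ℝ) := by
      rw [div_le_iff₀ hu0]
      nlinarith [sq_nonneg (√(T : ℝ) * √((T : ℝ) + 1) - (T + 1 / 2)),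
        mul_nonneg (Real.sqrt_nonneg (T : ℝ)) hu0.le]
    push_cast
    linarith

lemma forall_mem_Icc_of_succ {α : Type*} {P : Set α} {x : ℕ → α} {T : ℕ} (hx1 : x 1 ∈ P)
    (hsucc : ∀ t ∈ Icc 1 T, x (t + 1) ∈ P) : ∀ t ∈ Icc 1 (T + 1), x t ∈ P := by
  rintro (_ | _ | t) ht
  · simp at ht
  · exact hx1
  · exact hsucc (t + 1) (by simp at ht ⊢; omega)

theorem sum_inner_sub_le_of_projected_gradient {E : Type*} [NormedAddCommGroup E]
    [InnerProductSpace ℝ E] {P : Set E} (hP : Convex ℝ P) {D G : ℝ}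
    (hdiam : ∀ p ∈ P, ∀ q ∈ P, dist p q ≤ D) (hG : 0 < G) (T : ℕ) (g x : ℕ → E)
    (hg : ∀ t ∈ Icc 1 T, ‖g t‖ ≤ G) (η : ℕ → ℝ) (hη : ∀ t, η t = D / (G * √(t : ℝ)))
    (hx1 : x 1 ∈ P)
    (hstep : ∀ t ∈ Icc 1 T, x (t + 1) ∈ P ∧
      ∀ v ∈ P, ‖x t + η t • g t - x (t + 1)‖ ≤ ‖x t + η t • g t - v‖)
    {v : E} (hv : v ∈ P) :
    ∑ t ∈ Icc 1 T, ⟪g t, v - x t⟫ ≤ 3 / 2 * (D * G * √(T : ℝ)) := by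
  have hmem := forall_mem_Icc_of_succ hx1 fun t ht => (hstep t ht).1
  rcases (dist_nonneg.trans (hdiam v hv v hv)).eq_or_lt with rfl | hD
  · have hx : ∀ t ∈ Icc 1 T, x t = v := fun t ht =>
      dist_le_zero.1 (hdiam _ (hmem t (Icc_subset_Icc_right (Nat.le_succ T) ht)) v hv)
    rw [sum_congr rfl fun t ht => by rw [hx t ht, sub_self, inner_zero_right]]
    simp
  set w : ℕ → ℝ := fun t => G * √(t : ℝ) / (2 * D)
  have hstep' : ∀ t ∈ Icc 1 T, ⟪g t, v - x t⟫ ≤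
      w t * (‖x t - v‖ ^ 2 - ‖x (t + 1) - v‖ ^ 2) + D * G / 2 * (1 / √(t : ℝ)) := by
    intro t ht
    have hsqrt : 0 < √(t : ℝ) := Real.sqrt_pos.2 (by exact_mod_cast (mem_Icc.1 ht).1)
    have h := two_mul_inner_le_of_norm_sub_le (hP.norm_sub_le_of_forall_norm_sub_le
      (hstep t ht).1 (hstep t ht).2 hv)
    have hgt := pow_le_pow_left₀ (norm_nonneg _) (hg t ht) 2
    have hw : w t * (2 * η t) = 1 := by simp only [w, hη]; field_simp
    calc ⟪g t, v - x t⟫ = w t * (2 * η t * ⟪g t, v - x t⟫) := by rw [← mul_assoc, hw, one_mul]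
      _ ≤ w t * (‖x t - v‖ ^ 2 - ‖x (t + 1) - v‖ ^ 2 + η t ^ 2 * G ^ 2) := by
        gcongr
        nlinarith
      _ = w t * (‖x t - v‖ ^ 2 - ‖x (t + 1) - v‖ ^ 2) + D * G / 2 * (1 / √(t : ℝ)) := by
        simp only [w, hη]
        field_simp
  have htel := sum_Icc_mul_sub_le w (fun t => ‖x t - v‖ ^ 2) (D ^ 2)
    (fun s t hst => by simp only [w]; gcongr) (by simp [w]) T fun t ht =>
      pow_le_pow_left₀ (norm_nonneg _) (dist_eq_norm (x t) v ▸ hdiam _ (hmem t ht) v hv) 2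
  calc ∑ t ∈ Icc 1 T, ⟪g t, v - x t⟫
      ≤ ∑ t ∈ Icc 1 T, (w t * (‖x t - v‖ ^ 2 - ‖x (t + 1) - v‖ ^ 2)
          + D * G / 2 * (1 / √(t : ℝ))) := sum_le_sum hstep'
    _ ≤ w T * D ^ 2 + D * G / 2 * (2 * √(T : ℝ)) := by
      rw [sum_add_distrib, ← mul_sum]
      gcongr
      · nlinarith [htel, sq_nonneg ‖x (T + 1) - v‖, show 0 ≤ w T by positivity]
      · exact sum_Icc_inv_sqrt_le T
    _ = 3 / 2 * (D * G * √(T : ℝ)) := by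
      simp only [w]
      field_simp
      ring

theorem online_gradient_ascent_half_regret_general
    {n : ℕ} (T : ℕ)
    (b : EuclideanSpace ℝ (Fin n))
    (X : Set (EuclideanSpace ℝ (Fin n)))
    (hX : X = {y : EuclideanSpace ℝ (Fin n) | ∀ i, y i ∈ Set.Icc 0 (b i)})
    (P : Set (EuclideanSpace ℝ (Fin n)))
    (hPX : P ⊆ X) (hPconvex : Convex ℝ P)
    (D G : ℝ) (hD : Metric.diam P = D) (hG : 0 < G)
    (f : ℕ → EuclideanSpace ℝ (Fin n) → ℝ)
    (hdiff : ∀ t, Differentiable ℝ (f t))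
    (hnonneg : ∀ t, ∀ x ∈ X, 0 ≤ f t x)
    (hmono : ∀ t, ∀ x ∈ X, ∀ y ∈ X, (∀ i, x i ≤ y i) → f t x ≤ f t y)
    (hDR : ∀ t, ∀ x ∈ X, ∀ y ∈ X, (∀ i, x i ≤ y i) →
      ∀ i, gradient (f t) y i ≤ gradient (f t) x i)
    (hgradbound : ∀ t ∈ Finset.Icc 1 T, ∀ x ∈ P, ‖gradient (f t) x‖ ≤ G)
    (η : ℕ → ℝ) (hη : ∀ t, η t = D / (G * Real.sqrt t))
    (x : ℕ → EuclideanSpace ℝ (Fin n)) (hx1 : x 1 ∈ P)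
    (hupdate : ∀ t ∈ Finset.Icc 1 T,
      x (t + 1) ∈ P ∧
      ∀ v ∈ P, ‖x t + η t • gradient (f t) (x t) - x (t + 1)‖ ≤
        ‖x t + η t • gradient (f t) (x t) - v‖)
    (xstar : EuclideanSpace ℝ (Fin n)) (hxstar : xstar ∈ P) :
    (1 / 2 : ℝ) * ∑ t ∈ Finset.Icc 1 T, f t xstar -
        ∑ t ∈ Finset.Icc 1 T, f t (x t) ≤
      3 / 4 * (D * G * Real.sqrt T) := by
  subst hX
  have hmem : ∀ t ∈ Icc 1 T, x t ∈ P := fun t ht =>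
    forall_mem_Icc_of_succ hx1 (fun t ht => (hupdate t ht).1) t
      (Icc_subset_Icc_right (Nat.le_succ T) ht)
  have hdiam : ∀ p ∈ P, ∀ q ∈ P, dist p q ≤ D := fun p hp q hq =>
    hD ▸ Metric.dist_le_diam_of_mem ((isBounded_nonnegBox b).subset hPX) hp hq
  have hlinear := sum_inner_sub_le_of_projected_gradient hPconvex hdiam hG T
    (fun t => gradient (f t) (x t)) x (fun t ht => hgradbound t ht _ (hmem t ht)) η hη hx1
    hupdate hxstar
  have hDR_sum : ∑ t ∈ Icc 1 T, f t xstar - 2 * ∑ t ∈ Icc 1 T, f t (x t) ≤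
      ∑ t ∈ Icc 1 T, ⟪gradient (f t) (x t), xstar - x t⟫ := by
    rw [mul_sum, ← sum_sub_distrib]
    exact sum_le_sum fun t ht => sub_two_mul_le_inner_gradient (hdiff t) (hnonneg t) (hmono t)
      (hDR t) (hPX (hmem t ht)) (hPX hxstar)
  linarith

/-- Online (projected) gradient ascent regret bound for monotone DR-submodular
functions: `(1/2) Σ f_t(x*) - Σ f_t(x_t) ≤ (3/4) DG√T`. -/
theorem online_gradient_ascent_half_regret
    {n : ℕ} (T : ℕ) (hT : 1 ≤ T)
    (b : EuclideanSpace ℝ (Fin n)) (hb : ∀ i, 0 ≤ b i)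
    (X : Set (EuclideanSpace ℝ (Fin n)))
    (hX : X = {y : EuclideanSpace ℝ (Fin n) | ∀ i, y i ∈ Set.Icc 0 (b i)})
    (P : Set (EuclideanSpace ℝ (Fin n)))
    (hPX : P ⊆ X) (hPne : P.Nonempty) (hPclosed : IsClosed P) (hPconvex : Convex ℝ P)
    (D G : ℝ) (hD : Metric.diam P = D) (hG : 0 < G)
    (f : ℕ → EuclideanSpace ℝ (Fin n) → ℝ)
    (hdiff : ∀ t, Differentiable ℝ (f t))
    (hnonneg : ∀ t, ∀ x ∈ X, 0 ≤ f t x)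
    (hmono : ∀ t, ∀ x ∈ X, ∀ y ∈ X, (∀ i, x i ≤ y i) → f t x ≤ f t y)
    (hDR : ∀ t, ∀ x ∈ X, ∀ y ∈ X, (∀ i, x i ≤ y i) →
      ∀ i, gradient (f t) y i ≤ gradient (f t) x i)
    (hgradbound : ∀ t ∈ Finset.Icc 1 T, ∀ x ∈ P, ‖gradient (f t) x‖ ≤ G)
    (η : ℕ → ℝ) (hη : ∀ t, η t = D / (G * Real.sqrt t))
    (x : ℕ → EuclideanSpace ℝ (Fin n)) (hx1 : x 1 ∈ P)
    (hupdate : ∀ t ∈ Finset.Icc 1 T,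
      x (t + 1) ∈ P ∧
      ∀ v ∈ P, ‖x t + η t • gradient (f t) (x t) - x (t + 1)‖ ≤
        ‖x t + η t • gradient (f t) (x t) - v‖)
    (xstar : EuclideanSpace ℝ (Fin n)) (hxstar : xstar ∈ P)
    (hopt : ∀ y ∈ P, ∑ t ∈ Finset.Icc 1 T, f t y ≤ ∑ t ∈ Finset.Icc 1 T, f t xstar) :
    (1 / 2 : ℝ) * ∑ t ∈ Finset.Icc 1 T, f t xstar -
        ∑ t ∈ Finset.Icc 1 T, f t (x t) ≤
      3 / 4 * (D * G * Real.sqrt T) :=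
  online_gradient_ascent_half_regret_general T b X hX P hPX hPconvex D G hD hG f hdiff hnonneg hmono
    hDR hgradbound η hη x hx1 hupdate xstar hxstar
end
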